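/- arXiv:2307.15153 — 4 statements merged into one kernel-verified Lean document; each statement's English description precedes it below -/
import Mathlib

section
/- Let ν ∈ W^{2,∞}(ℝ), ν̄ ∈ W^{1,∞}(ℝ) with ν̄(0)=0, and μ ∈ (C^1 ∩ W^{1,∞})(ℝ). For u, v ∈ (L^1 ∩ L^∞)(ℝ), define U(x) = ν((μ * ν̄(u))(x)) and V(x) = ν((μ * ν̄(v))(x)). Then for all x, |V'(x) − U'(x)| ≤ (‖ν'‖_∞ ‖ν̄'‖_∞ ‖μ'‖_∞ + ‖ν̄'‖_∞^2 ‖μ'‖_∞ ‖μ‖_∞ ‖ν''‖_∞ ‖u‖_{L^1}) ‖u − v‖_{L^1(ℝ)}. -/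
/-!
Write `F_w(y) = ∫ μ(y - ξ) ν̄(w ξ) dξ` and `G_w(y) = ∫ μ'(y - ξ) ν̄(w ξ) dξ`. Differentiating
under the integral sign (dominated by `‖μ'‖_∞ |ν̄(w)|`) gives `U' = ν'(F_u) G_u` and
`V' = ν'(F_v) G_v`, and
`V' - U' = ν'(F_v) (G_v - G_u) + (ν'(F_v) - ν'(F_u)) G_u`.
Since `ν̄` is Lipschitz with `ν̄(0) = 0`, both `|F_v - F_u|` and `|G_v - G_u|` are bounded by
a sup norm times `‖ν̄'‖_∞ ‖u - v‖_1`, while `|G_u| ≤ ‖μ'‖_∞ ‖ν̄'‖_∞ ‖u‖_1`; the mean value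
theorem bounds `|ν'(F_v) - ν'(F_u)|` by `‖ν''‖_∞ |F_v - F_u|`.
-/

open MeasureTheory

theorem abs_mul_sub_mul_le_of_le {a a' b b' A B D E : ℝ} (hA : |a'| ≤ A) (hB : |b' - b| ≤ B)
    (hD : |a' - a| ≤ D) (hE : |b| ≤ E) :
    |a' * b' - a * b| ≤ A * B + D * E := by
  have hsplit : a' * b' - a * b = a' * (b' - b) + (a' - a) * b := by ring
  calc |a' * b' - a * b| ≤ |a'| * |b' - b| + |a' - a| * |b| := by
        rw [hsplit, ← abs_mul, ← abs_mul]
        exact abs_add_le _ _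
    _ ≤ A * B + D * E := by
        gcongr
        · exact (abs_nonneg _).trans hA
        · exact (abs_nonneg _).trans hD

theorem abs_sub_le_of_abs_deriv_le {f : ℝ → ℝ} {C : ℝ} (hf : Differentiable ℝ f)
    (hf' : ∀ x, |deriv f x| ≤ C) (a b : ℝ) :
    |f a - f b| ≤ C * |a - b| :=
  convex_univ.norm_image_sub_le_of_norm_deriv_le (fun x _ => hf x) (fun x _ => hf' x)
    (Set.mem_univ b) (Set.mem_univ a)

section Integral

variable {α : Type*} [MeasurableSpace α] {m : Measure α}

theorem abs_integral_mul_le_of_abs_le {w g h : α → ℝ} {C : ℝ} (hw : ∀ ξ, |w ξ| ≤ C)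
    (hg : ∀ ξ, |g ξ| ≤ h ξ) (hh : Integrable h m) :
    |∫ ξ, w ξ * g ξ ∂m| ≤ C * ∫ ξ, h ξ ∂m := by
  rw [← integral_const_mul C h, ← Real.norm_eq_abs]
  refine norm_integral_le_of_norm_le (hh.const_mul C) (.of_forall fun ξ => ?_)
  rw [Real.norm_eq_abs, abs_mul]
  exact mul_le_mul (hw ξ) (hg ξ) (abs_nonneg _) ((abs_nonneg _).trans (hw ξ))

variable {f : ℝ → ℝ} {L : ℝ}

theorem MeasureTheory.Integrable.comp_of_abs_sub_le (hf : ∀ a b, |f a - f b| ≤ L * |a - b|) (hf0 : f 0 = 0)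
    {u : α → ℝ} (hu : Integrable u m) : Integrable (fun ξ => f (u ξ)) m := by
  have hlip : LipschitzWith (Real.toNNReal L) f :=
    LipschitzWith.of_dist_le' fun a b => by simpa only [Real.dist_eq] using hf a b
  rw [← memLp_one_iff_integrable] at hu ⊢
  exact hlip.comp_memLp hf0 hu

theorem abs_integral_mul_comp_sub_le {w u v : α → ℝ} {C : ℝ} (hw : AEStronglyMeasurable w m)
    (hwC : ∀ ξ, |w ξ| ≤ C) (hf : ∀ a b, |f a - f b| ≤ L * |a - b|) (hf0 : f 0 = 0)
    (hu : Integrable u m) (hv : Integrable v m) :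
    |∫ ξ, w ξ * f (v ξ) ∂m - ∫ ξ, w ξ * f (u ξ) ∂m| ≤ C * L * ∫ ξ, |u ξ - v ξ| ∂m := by
  have hwC' : ∀ᵐ ξ ∂m, ‖w ξ‖ ≤ C := .of_forall hwC
  rw [← integral_sub ((hv.comp_of_abs_sub_le hf hf0).bdd_mul hw hwC')
    ((hu.comp_of_abs_sub_le hf hf0).bdd_mul hw hwC'), mul_assoc, ← integral_const_mul]
  simp_rw [← mul_sub]
  refine abs_integral_mul_le_of_abs_le hwC (fun ξ => ?_) ((hu.sub hv).abs.const_mul L)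
  rw [abs_sub_comm (u ξ)]
  exact hf _ _

end Integral

section Convolution

variable {μ : ℝ → ℝ} {Cμ Cμ' : ℝ}

theorem hasDerivAt_integral_mul_sub (hμ : Differentiable ℝ μ) (hμb : ∀ x, |μ x| ≤ Cμ)
    (hμ' : ∀ x, |deriv μ x| ≤ Cμ') {g : ℝ → ℝ} (hg : Integrable g) (x : ℝ) :
    HasDerivAt (fun y => ∫ ξ, μ (y - ξ) * g ξ) (∫ ξ, deriv μ (x - ξ) * g ξ) x := by
  have hμm : ∀ y, AEStronglyMeasurable (fun ξ => μ (y - ξ)) :=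
    fun y => (hμ.continuous.comp (continuous_const.sub continuous_id)).aestronglyMeasurable
  refine (hasDerivAt_integral_of_dominated_loc_of_deriv_le (F := fun y ξ => μ (y - ξ) * g ξ)
    (F' := fun y ξ => deriv μ (y - ξ) * g ξ) (bound := fun ξ => Cμ' * |g ξ|)
    Filter.univ_mem (.of_forall fun y => (hμm y).mul hg.1)
    (hg.bdd_mul (hμm x) (.of_forall fun ξ => hμb (x - ξ)))
    (((measurable_deriv μ).comp (measurable_const.sub measurable_id)).aestronglyMeasurable.mul
      hg.1)
    (.of_forall fun ξ y _ => ?_) (hg.abs.const_mul _) (.of_forall fun ξ y _ => ?_)).2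
  · rw [Real.norm_eq_abs, abs_mul]
    exact mul_le_mul_of_nonneg_right (hμ' _) (abs_nonneg _)
  · simpa using ((hμ (y - ξ)).hasDerivAt.comp y ((hasDerivAt_id y).sub_const ξ)).mul_const (g ξ)

theorem hasDerivAt_comp_integral_mul_sub {ν : ℝ → ℝ} (hν : Differentiable ℝ ν)
    (hμ : Differentiable ℝ μ) (hμb : ∀ x, |μ x| ≤ Cμ) (hμ' : ∀ x, |deriv μ x| ≤ Cμ')
    {g : ℝ → ℝ} (hg : Integrable g) (x : ℝ) :
    HasDerivAt (fun y => ν (∫ ξ, μ (y - ξ) * g ξ))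
      (deriv ν (∫ ξ, μ (x - ξ) * g ξ) * ∫ ξ, deriv μ (x - ξ) * g ξ) x :=
  (hν _).hasDerivAt.comp x (hasDerivAt_integral_mul_sub hμ hμb hμ' hg x)

end Convolution

theorem nonlocal_velocity_deriv_Linfty_bound_general
    (ν νb μ u v : ℝ → ℝ) (Cν' Cν'' Cμ Cμ' Cνb' : ℝ)
    (hνC2 : ContDiff ℝ 2 ν)
    (hν1 : ∀ a : ℝ, |deriv ν a| ≤ Cν')
    (hν2 : ∀ a : ℝ, |deriv (deriv ν) a| ≤ Cν'')
    (hμC1 : ContDiff ℝ 1 μ)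
    (hμb : ∀ x : ℝ, |μ x| ≤ Cμ)
    (hμ'b : ∀ x : ℝ, |deriv μ x| ≤ Cμ')
    (hνb : ∀ a b : ℝ, |νb a - νb b| ≤ Cνb' * |a - b|)
    (hνb0 : νb 0 = 0)
    (hu : Integrable u) (hv : Integrable v) :
    ∀ x : ℝ,
      |deriv (fun y => ν (∫ ξ, μ (y - ξ) * νb (v ξ))) x
        - deriv (fun y => ν (∫ ξ, μ (y - ξ) * νb (u ξ))) x|
        ≤ (Cν' * Cνb' * Cμ' + Cνb' ^ 2 * Cμ' * Cμ * Cν'' * ∫ ξ, |u ξ|)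
            * ∫ ξ, |u ξ - v ξ| := by
  intro x
  have hν : Differentiable ℝ ν := hνC2.differentiable two_ne_zero
  have hν' : Differentiable ℝ (deriv ν) := hνC2.differentiable_deriv_two
  have hμ : Differentiable ℝ μ := hμC1.differentiable one_ne_zero
  have hμm : AEStronglyMeasurable (fun ξ => μ (x - ξ)) :=
    (hμ.continuous.comp (continuous_const.sub continuous_id)).aestronglyMeasurable
  have hμ'm : AEStronglyMeasurable (fun ξ => deriv μ (x - ξ)) :=
    ((measurable_deriv μ).comp (measurable_const.sub measurable_id)).aestronglyMeasurable
  have hGu : |∫ ξ, deriv μ (x - ξ) * νb (u ξ)| ≤ Cμ' * (Cνb' * ∫ ξ, |u ξ|) := by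
    rw [← integral_const_mul]
    exact abs_integral_mul_le_of_abs_le (fun ξ => hμ'b (x - ξ))
      (fun ξ => by simpa [hνb0] using hνb (u ξ) 0) (hu.abs.const_mul Cνb')
  have hG := abs_integral_mul_comp_sub_le hμ'm (fun ξ => hμ'b (x - ξ)) hνb hνb0 hu hv
  have hν'F := (abs_sub_le_of_abs_deriv_le hν' hν2 _ _).trans (mul_le_mul_of_nonneg_left
    (abs_integral_mul_comp_sub_le hμm (fun ξ => hμb (x - ξ)) hνb hνb0 hu hv)
    ((abs_nonneg _).trans (hν2 0)))
  rw [(hasDerivAt_comp_integral_mul_sub hν hμ hμb hμ'b (hv.comp_of_abs_sub_le hνb hνb0) x).deriv,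
    (hasDerivAt_comp_integral_mul_sub hν hμ hμb hμ'b (hu.comp_of_abs_sub_le hνb hνb0) x).deriv]
  refine (abs_mul_sub_mul_le_of_le (hν1 _) hG hν'F hGu).trans_eq ?_
  ring

/-- L∞ bound on the difference of the derivatives of the
nonlocal velocities. -/
theorem nonlocal_velocity_deriv_Linfty_bound
    (ν νb μ u v : ℝ → ℝ) (Cν' Cν'' Cμ Cμ' Cνb' : ℝ)
    (hνC2 : ContDiff ℝ 2 ν)
    (hν1 : ∀ a : ℝ, |deriv ν a| ≤ Cν')
    (hν2 : ∀ a : ℝ, |deriv (deriv ν) a| ≤ Cν'')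
    (hμC1 : ContDiff ℝ 1 μ)
    (hμb : ∀ x : ℝ, |μ x| ≤ Cμ)
    (hμ'b : ∀ x : ℝ, |deriv μ x| ≤ Cμ')
    (hνb : ∀ a b : ℝ, |νb a - νb b| ≤ Cνb' * |a - b|)
    (hνb0 : νb 0 = 0)
    (hu : Integrable u) (hv : Integrable v)
    (hum : Measurable u) (hvm : Measurable v)
    (Mu Mv : ℝ) (hub : ∀ x, |u x| ≤ Mu) (hvb : ∀ x, |v x| ≤ Mv) :
    ∀ x : ℝ,
      |deriv (fun y => ν (∫ ξ, μ (y - ξ) * νb (v ξ))) x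
        - deriv (fun y => ν (∫ ξ, μ (y - ξ) * νb (u ξ))) x|
        ≤ (Cν' * Cνb' * Cμ' + Cνb' ^ 2 * Cμ' * Cμ * Cν'' * ∫ ξ, |u ξ|)
            * ∫ ξ, |u ξ - v ξ| :=
  nonlocal_velocity_deriv_Linfty_bound_general ν νb μ u v Cν' Cν'' Cμ Cμ' Cνb' hνC2 hν1 hν2 hμC1 hμb
    hμ'b hνb hνb0 hu hv
end

section
/- Consider the Lax–Friedrichs type marching formula u_i^{n+1} = u_i^n − λ(F(ν(c^n_{i+1/2}), s_i u_i^n, s_{i+1} u_{i+1}^n) − F(ν(c^n_{i−1/2}), s_{i−1} u_{i−1}^n, s_i u_i^n)) with F(a,b,c) = (a/2)(f(b)+f(c)) − Θ(c−b)/(2λ). Suppose f is Lipschitz with f(0)=0, ν bounded, s_i ≥ s_min > 0, s_i ≤ S, Θ ∈ (0, 2/(3S)), and the CFL condition λ ≤ min(1, 4−6ΘS, 6ΘS)/(1 + 6 S Lip(f) ‖ν‖_∞) holds. If u_i^n ≥ 0 for all i ∈ ℤ, then u_i^{n+1} ≥ 0 for all i ∈ ℤ. -/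
/-!
Since `f 0 = 0`, the fluxes are bounded by `|ν (c) f (s u)| ≤ K s u` with `K = Lip(f) ‖ν‖_∞`, and
with `b_j = s_j u_j ≥ 0` the update is bounded below by
`u_i - (Θ + λK) b_i + (Θ - λK) / 2 * (b_{i-1} + b_{i+1})`.
The CFL condition gives `λK ≤ Θ` and `(Θ + λK) S ≤ 2/3`, so both terms are nonnegative
(using `b_i ≤ S u_i`).
-/

lemma abs_le_mul_of_lipschitz_of_map_zero {f : ℝ → ℝ} {L b : ℝ}
    (hf : ∀ x y : ℝ, |f x - f y| ≤ L * |x - y|) (hf0 : f 0 = 0) (hb : 0 ≤ b) :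
    |f b| ≤ L * b := by
  simpa [hf0, abs_of_nonneg hb] using hf b 0

lemma cfl_bounds {lam Θ K S : ℝ} (hlam : 0 ≤ lam) (hK : 0 ≤ K) (hS : 0 < S)
    (hCFL : lam ≤ min 1 (min (4 - 6 * Θ * S) (6 * Θ * S)) / (1 + 6 * S * K)) :
    lam * K ≤ Θ ∧ (Θ + lam * K) * S ≤ 1 := by
  have hmin := (le_div_iff₀ (by positivity)).mp hCFL
  have hupwind : lam * (1 + 6 * S * K) ≤ 6 * Θ * S :=
    hmin.trans ((min_le_right _ _).trans (min_le_right _ _))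
  have hcentral : lam * (1 + 6 * S * K) ≤ 4 - 6 * Θ * S :=
    hmin.trans ((min_le_right _ _).trans (min_le_left _ _))
  constructor
  · nlinarith
  · nlinarith

lemma lam_mul_flux_sub_eq {f : ℝ → ℝ} {F : ℝ → ℝ → ℝ → ℝ} {lam Θ : ℝ} (hlam : lam ≠ 0)
    (hF : ∀ a b c : ℝ, F a b c = a / 2 * (f b + f c) - Θ * (c - b) / (2 * lam))
    (a a' bm b0 bp : ℝ) :
    lam * (F a b0 bp - F a' bm b0) =
      lam / 2 * (a * (f b0 + f bp) - a' * (f bm + f b0)) - Θ / 2 * (bp - 2 * b0 + bm) := by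
  rw [hF, hF]
  field_simp
  ring

lemma abs_mul_add_le {a C x y L s t : ℝ} (ha : |a| ≤ C)
    (hx : |x| ≤ L * s) (hy : |y| ≤ L * t) :
    |a * (x + y)| ≤ C * L * (s + t) := by
  rw [abs_mul, mul_assoc, mul_add L]
  exact mul_le_mul ha ((abs_add_le x y).trans (add_le_add hx hy)) (abs_nonneg _)
    ((abs_nonneg a).trans ha)

lemma viscous_step_nonneg {lam Θ C L S u a a' bm b0 bp fm f0 fp : ℝ}
    (hlam : 0 ≤ lam) (hC : 0 ≤ C) (hL : 0 ≤ L) (hu : 0 ≤ u)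
    (hbm : 0 ≤ bm) (hbp : 0 ≤ bp) (hb0S : b0 ≤ S * u)
    (hupwind : lam * (L * C) ≤ Θ) (hcentral : (Θ + lam * (L * C)) * S ≤ 1)
    (ha : |a| ≤ C) (ha' : |a'| ≤ C)
    (hfm : |fm| ≤ L * bm) (hf0 : |f0| ≤ L * b0) (hfp : |fp| ≤ L * bp) :
    0 ≤ u - (lam / 2 * (a * (f0 + fp) - a' * (fm + f0)) - Θ / 2 * (bp - 2 * b0 + bm)) := by
  have hright := (abs_le.mp (abs_mul_add_le ha hf0 hfp)).2
  have hleft := (abs_le.mp (abs_mul_add_le ha' hfm hf0)).1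
  have hflux : lam / 2 * (a * (f0 + fp) - a' * (fm + f0)) ≤
      lam * (L * C) / 2 * (bm + 2 * b0 + bp) :=
    calc lam / 2 * (a * (f0 + fp) - a' * (fm + f0))
        ≤ lam / 2 * (C * L * (bm + 2 * b0 + bp)) :=
          mul_le_mul_of_nonneg_left (by linarith) (by positivity)
      _ = lam * (L * C) / 2 * (bm + 2 * b0 + bp) := by ring
  have hcenter : (Θ + lam * (L * C)) * b0 ≤ u :=
    calc (Θ + lam * (L * C)) * b0 ≤ (Θ + lam * (L * C)) * (S * u) :=
          mul_le_mul_of_nonneg_left hb0S (by nlinarith [mul_nonneg hlam (mul_nonneg hL hC)])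
      _ = ((Θ + lam * (L * C)) * S) * u := by ring
      _ ≤ u := mul_le_of_le_one_left hu hcentral
  have hneighbours : 0 ≤ (Θ - lam * (L * C)) * (bm + bp) :=
    mul_nonneg (sub_nonneg.mpr hupwind) (add_nonneg hbm hbp)
  linarith

theorem LaxFriedrichs_positivity_general
    (f ν : ℝ → ℝ) (s : ℤ → ℝ) (c u unext : ℤ → ℝ)
    (lam Θ Lf Cν smin S : ℝ)
    (hlam : 0 < lam)
    (hLf : 0 ≤ Lf)
    (hf : ∀ a b : ℝ, |f a - f b| ≤ Lf * |a - b|)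
    (hf0 : f 0 = 0)
    (hν : ∀ x : ℝ, |ν x| ≤ Cν)
    (hsmin : 0 < smin)
    (hs : ∀ i : ℤ, smin ≤ s i ∧ s i ≤ S)
    (hCFL : lam ≤ min 1 (min (4 - 6 * Θ * S) (6 * Θ * S)) / (1 + 6 * S * Lf * Cν))
    (F : ℝ → ℝ → ℝ → ℝ)
    (hF : ∀ a b c : ℝ, F a b c = a / 2 * (f b + f c) - Θ * (c - b) / (2 * lam))
    (hscheme : ∀ i : ℤ,
      unext i = u i
        - lam * (F (ν (c i)) (s i * u i) (s (i + 1) * u (i + 1))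
            - F (ν (c (i - 1))) (s (i - 1) * u (i - 1)) (s i * u i)))
    (hpos : ∀ i : ℤ, 0 ≤ u i) :
    ∀ i : ℤ, 0 ≤ unext i := by
  intro i
  have hS : 0 < S := hsmin.trans_le ((hs 0).1.trans (hs 0).2)
  have hCν : 0 ≤ Cν := (abs_nonneg _).trans (hν 0)
  rw [mul_assoc (6 * S)] at hCFL
  obtain ⟨hupwind, hcentral⟩ := cfl_bounds hlam.le (mul_nonneg hLf hCν) hS hCFL
  have hb : ∀ j, 0 ≤ s j * u j := fun j => mul_nonneg (hsmin.le.trans (hs j).1) (hpos j)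
  have hflux : ∀ j, |f (s j * u j)| ≤ Lf * (s j * u j) := fun j =>
    abs_le_mul_of_lipschitz_of_map_zero hf hf0 (hb j)
  rw [hscheme i, lam_mul_flux_sub_eq hlam.ne' hF]
  exact viscous_step_nonneg hlam.le hCν hLf (hpos i) (hb _) (hb _)
    (mul_le_mul_of_nonneg_right (hs i).2 (hpos i)) hupwind hcentral (hν _) (hν _)
    (hflux _) (hflux _) (hflux _)

/-- positivity of the Lax–Friedrichs type marching formula. -/
theorem LaxFriedrichs_positivity
    (f ν : ℝ → ℝ) (s : ℤ → ℝ) (c u unext : ℤ → ℝ)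
    (lam Θ Lf Cν smin S : ℝ)
    (hlam : 0 < lam)
    (hLf : 0 ≤ Lf)
    (hf : ∀ a b : ℝ, |f a - f b| ≤ Lf * |a - b|)
    (hf0 : f 0 = 0)
    (hν : ∀ x : ℝ, |ν x| ≤ Cν)
    (hsmin : 0 < smin)
    (hs : ∀ i : ℤ, smin ≤ s i ∧ s i ≤ S)
    (hΘ : 0 < Θ ∧ Θ < 2 / (3 * S))
    (hCFL : lam ≤ min 1 (min (4 - 6 * Θ * S) (6 * Θ * S)) / (1 + 6 * S * Lf * Cν))
    (F : ℝ → ℝ → ℝ → ℝ)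
    (hF : ∀ a b c : ℝ, F a b c = a / 2 * (f b + f c) - Θ * (c - b) / (2 * lam))
    (hscheme : ∀ i : ℤ,
      unext i = u i
        - lam * (F (ν (c i)) (s i * u i) (s (i + 1) * u (i + 1))
            - F (ν (c (i - 1))) (s (i - 1) * u (i - 1)) (s i * u i)))
    (hpos : ∀ i : ℤ, 0 ≤ u i) :
    ∀ i : ℤ, 0 ≤ unext i :=
  LaxFriedrichs_positivity_general f ν s c u unext lam Θ Lf Cν smin S hlam hLf hf hf0 hν hsmin hs
    hCFL F hF hscheme hpos
end

section
/- Let H(c₋, c₊, a, b, c) = b − λ(F(ν(c₊), s b, s' c) − F(ν(c₋), s'' a, s b)) be a marching operator that is monotone nondecreasing in its last three arguments (for each fixed c₋, c₊), and suppose H(c₋, c₊, k_{i−1}, k_i, k_{i+1}) = k_i − λ f(α)(ν(c₊) − ν(c₋)) where k_j = α/s_j. Then for all real u_{i−1}, u_i, u_{i+1}: |u_i − k_i| − λ(G_{i+1/2}(u_i, u_{i+1}) − G_{i−1/2}(u_{i−1}, u_i)) ≥ |u_i^{new} − k_i| + λ f(α) sgn(u_i^{new} − k_i)(ν(c₊)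 − ν(c₋)), where u_i^{new} = H(c₋, c₊, u_{i−1}, u_i, u_{i+1}) and G_{i+1/2}(p,q) = F(ν(c₊), s_i max(p,k_i), s_{i+1} max(q,k_{i+1})) − F(ν(c₊), s_i min(p,k_i), s_{i+1} min(q,k_{i+1})). -/
/-!
Crandall–Majda: a monotone `H` satisfies `|H u - H k| ≤ H (u ⊔ k) - H (u ⊓ k)`, and by the
conservation form of `H` and `max - min = |·|` this upper bound is exactly
`|u_i - k_i| - λ (G₊ - G₋)`. Since `H k = k_i - c` with `c = λ f(α) Δν`, the lower side is
`|x + c|` for `x = H u - k_i`, and `|x + c| ≥ sgn x · (x + c) = |x| + sgn x · c`.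
-/

namespace Real

theorem abs_sign_le_one (r : ℝ) : |sign r| ≤ 1 := by
  rcases sign_apply_eq r with h | h | h <;> simp [h]

theorem sign_mul_self (r : ℝ) : sign r * r = |r| := by
  rcases lt_trichotomy r 0 with h | rfl | h
  · rw [sign_of_neg h, abs_of_neg h, neg_one_mul]
  · simp
  · rw [sign_of_pos h, abs_of_pos h, one_mul]

theorem abs_add_sign_mul_le_abs_add (a b : ℝ) : |a| + sign a * b ≤ |a + b| :=
  calc |a| + sign a * b = sign a * (a + b) := by rw [mul_add, sign_mul_self]
    _ ≤ |sign a| * |a + b| := (le_abs_self _).trans (abs_mul _ _).le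
    _ ≤ |a + b| := mul_le_of_le_one_left (abs_nonneg _) (abs_sign_le_one a)

end Real

theorem Monotone.abs_sub_le_map_sup_sub_map_inf {α β : Type*} [Lattice α] [AddCommGroup β]
    [LinearOrder β] [IsOrderedAddMonoid β] {g : α → β} (hg : Monotone g) (u k : α) :
    |g u - g k| ≤ g (u ⊔ k) - g (u ⊓ k) :=
  abs_sub_le_iff.2 ⟨sub_le_sub (hg le_sup_left) (hg inf_le_right),
    sub_le_sub (hg le_sup_right) (hg inf_le_left)⟩

theorem discrete_entropy_inequality_general
    (F : ℝ → ℝ → ℝ → ℝ) (ν f : ℝ → ℝ)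
    (lam α cminus cplus sim si sip : ℝ)
    (H : ℝ → ℝ → ℝ → ℝ)
    (hH : ∀ a b c : ℝ,
      H a b c = b - lam * (F (ν cplus) (si * b) (sip * c)
        - F (ν cminus) (sim * a) (si * b)))
    (hmono : ∀ a b c a' b' c' : ℝ,
      a ≤ a' → b ≤ b' → c ≤ c' → H a b c ≤ H a' b' c')
    (kim ki kip : ℝ)
    (hk : H kim ki kip = ki - lam * f α * (ν cplus - ν cminus))
    (Gp Gm : ℝ → ℝ → ℝ)
    (hGp : ∀ p q : ℝ,
      Gp p q = F (ν cplus) (si * max p ki) (sip * max q kip)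
        - F (ν cplus) (si * min p ki) (sip * min q kip))
    (hGm : ∀ p q : ℝ,
      Gm p q = F (ν cminus) (sim * max p kim) (si * max q ki)
        - F (ν cminus) (sim * min p kim) (si * min q ki))
    (uim ui uip : ℝ) :
    |ui - ki| - lam * (Gp ui uip - Gm uim ui)
      ≥ |H uim ui uip - ki|
        + lam * f α * Real.sign (H uim ui uip - ki) * (ν cplus - ν cminus) := by
  set g : ℝ × ℝ × ℝ → ℝ := fun p => H p.1 p.2.1 p.2.2
  have hg : Monotone g := fun p q hpq => hmono _ _ _ _ _ _ hpq.1 hpq.2.1 hpq.2.2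
  have hcontract := hg.abs_sub_le_map_sup_sub_map_inf (uim, ui, uip) (kim, ki, kip)
  have hsup_sub_inf : g ((uim, ui, uip) ⊔ (kim, ki, kip)) - g ((uim, ui, uip) ⊓ (kim, ki, kip))
      = |ui - ki| - lam * (Gp ui uip - Gm uim ui) := by
    simp only [g, Prod.sup_def, Prod.inf_def]
    rw [hH, hH, hGp, hGm, ← max_sub_min_eq_abs, max_comm ki, min_comm ki]
    ring
  have hshift : g (uim, ui, uip) - g (kim, ki, kip)
      = (H uim ui uip - ki) + lam * f α * (ν cplus - ν cminus) := by
    simp only [g, hk]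
    ring
  rw [← hsup_sub_inf, ge_iff_le]
  calc |H uim ui uip - ki| + lam * f α * Real.sign (H uim ui uip - ki) * (ν cplus - ν cminus)
      = |H uim ui uip - ki|
          + Real.sign (H uim ui uip - ki) * (lam * f α * (ν cplus - ν cminus)) := by ring
    _ ≤ |g (uim, ui, uip) - g (kim, ki, kip)| := hshift ▸ Real.abs_add_sign_mul_le_abs_add _ _
    _ ≤ _ := hcontract

/-- Crandall–Majda type discrete entropy inequality for the
monotone marching operator. -/
theorem discrete_entropy_inequality
    (F : ℝ → ℝ → ℝ → ℝ) (ν f : ℝ → ℝ)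
    (lam α cminus cplus sim si sip : ℝ)
    (hsim : 0 < sim) (hsi : 0 < si) (hsip : 0 < sip)
    (H : ℝ → ℝ → ℝ → ℝ)
    (hH : ∀ a b c : ℝ,
      H a b c = b - lam * (F (ν cplus) (si * b) (sip * c)
        - F (ν cminus) (sim * a) (si * b)))
    (hmono : ∀ a b c a' b' c' : ℝ,
      a ≤ a' → b ≤ b' → c ≤ c' → H a b c ≤ H a' b' c')
    (kim ki kip : ℝ)
    (hkim : kim = α / sim) (hki : ki = α / si) (hkip : kip = α / sip)
    (hk : H kim ki kip = ki - lam * f α * (ν cplus - ν cminus))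
    (Gp Gm : ℝ → ℝ → ℝ)
    (hGp : ∀ p q : ℝ,
      Gp p q = F (ν cplus) (si * max p ki) (sip * max q kip)
        - F (ν cplus) (si * min p ki) (sip * min q kip))
    (hGm : ∀ p q : ℝ,
      Gm p q = F (ν cminus) (sim * max p kim) (si * max q ki)
        - F (ν cminus) (sim * min p kim) (si * min q ki))
    (uim ui uip : ℝ) :
    |ui - ki| - lam * (Gp ui uip - Gm uim ui)
      ≥ |H uim ui uip - ki|
        + lam * f α * Real.sign (H uim ui uip - ki) * (ν cplus - ν cminus) :=
  discrete_entropy_inequality_general F ν f lam α cminus cplus sim si sip H hH hmono kim ki kip hk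
    Gp Gm hGp hGm uim ui uip
end

section
/- Let the marching operator be u_i^{n+1} = H̃(ν(c^n_{i−1/2}), ν(c^n_{i+1/2}), s_{i−1}u_{i−1}^n, s_i u_i^n, s_{i+1}u_{i+1}^n)/s_i, where H̃ is, for fixed first two arguments, nondecreasing in each of its last three arguments and satisfies H̃(a, b, 1, 1, 1) = 1 for all a, b (which holds when f(0)=f(1)=0). If s_i ≥ 1 for all i and 0 ≤ s_i u_i^n ≤ 1 for all i, then 0 ≤ s_i u_i^{n+1} ≤ 1 for all i; in particular 0 ≤ u_i^{n+1} ≤ 1 (invariant region principle). -/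
open Set

theorem apply_mem_Icc_of_monotone₃ {α β : Type*} [Preorder α] [Preorder β] {g : α → α → α → β}
    (hg : ∀ p q r p' q' r' : α, p ≤ p' → q ≤ q' → r ≤ r' → g p q r ≤ g p' q' r')
    {a b p q r : α} (hp : p ∈ Icc a b) (hq : q ∈ Icc a b) (hr : r ∈ Icc a b) :
    g p q r ∈ Icc (g a a a) (g b b b) :=
  ⟨hg _ _ _ _ _ _ hp.1 hq.1 hr.1, hg _ _ _ _ _ _ hp.2 hq.2 hr.2⟩

theorem mem_Icc_zero_one_of_mul_mem_Icc {α : Type*} [Semiring α] [LinearOrder α]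
    [IsStrictOrderedRing α] {s x : α} (hs : 1 ≤ s) (h : s * x ∈ Icc 0 1) :
    x ∈ Icc 0 1 := by
  have hx : 0 ≤ x := nonneg_of_mul_nonneg_right h.1 (zero_lt_one.trans_le hs)
  exact ⟨hx, (le_mul_of_one_le_left hx hs).trans h.2⟩

/-- invariant region principle. -/
theorem invariant_region_principle
    (Htil : ℝ → ℝ → ℝ → ℝ → ℝ → ℝ) (ν : ℝ → ℝ)
    (s c u unext : ℤ → ℝ)
    (hmono : ∀ a b : ℝ, ∀ p q r p' q' r' : ℝ,
      p ≤ p' → q ≤ q' → r ≤ r' → Htil a b p q r ≤ Htil a b p' q' r')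
    (hH1 : ∀ a b : ℝ, Htil a b 1 1 1 = 1)
    (hH0 : ∀ a b : ℝ, Htil a b 0 0 0 = 0)
    (hs : ∀ i : ℤ, 1 ≤ s i)
    (hscheme : ∀ i : ℤ,
      s i * unext i
        = Htil (ν (c (i - 1))) (ν (c i))
            (s (i - 1) * u (i - 1)) (s i * u i) (s (i + 1) * u (i + 1)))
    (hbound : ∀ i : ℤ, 0 ≤ s i * u i ∧ s i * u i ≤ 1) :
    ∀ i : ℤ, (0 ≤ s i * unext i ∧ s i * unext i ≤ 1)
      ∧ (0 ≤ unext i ∧ unext i ≤ 1) := by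
  intro i
  have hnext : s i * unext i ∈ Icc 0 1 := by
    have h := apply_mem_Icc_of_monotone₃ (hmono (ν (c (i - 1))) (ν (c i)))
      (hbound (i - 1)) (hbound i) (hbound (i + 1))
    rwa [hH0, hH1, ← hscheme] at h
  exact ⟨hnext, mem_Icc_zero_one_of_mul_mem_Icc (hs i) hnext⟩
end
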